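/- arXiv:2207.12181 — 2 statements merged into one kernel-verified Lean document; each statement's English description precedes it below -/
import Mathlib

section
/- The 5-cycle C₅ is, up to isomorphism, the unique connected ladderful simple graph on 5 vertices. -/
/-- A vertex `v` is a rung if there are two adjacent vertices, both distinct from `v`,
neither of which is adjacent to `v`. -/
def IsRung {V : Type*} (G : SimpleGraph V) (v : V) : Prop :=
  ∃ w₁ w₂ : V, w₁ ≠ v ∧ w₂ ≠ v ∧ G.Adj w₁ w₂ ∧ ¬ G.Adj v w₁ ∧ ¬ G.Adj v w₂

/-- A graph is ladderful if every vertex is a rung. -/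
def Ladderful {V : Type*} (G : SimpleGraph V) : Prop :=
  ∀ v : V, IsRung G v

/-- The cycle graph on `ZMod n`: `x` and `y` are adjacent iff they differ by `1`. -/
def cycleG (n : ℕ) : SimpleGraph (ZMod n) :=
  SimpleGraph.fromRel (fun x y => x - y = 1)

/-!
In a ladderful graph every vertex has at least two non-neighbours besides itself, so on five
vertices the maximum degree is at most two. A connected graph of maximum degree two has a
Hamiltonian path `a b c d e`: grow a path along an edge leaving it, which can only start at an
end of the path since its inner vertices are already saturated. The only vertices other than `c`
not adjacent to `c` are `a` and `e`, so the rung at `c` is the edge `e a`. This closes a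
Hamiltonian cycle, which by the degree bound is all of the graph.
-/

open SimpleGraph

theorem ZMod.natCast_ne_zero_of_pos_of_lt {k n : ℕ} (h0 : 0 < k) (hk : k < n) :
    (k : ZMod n) ≠ 0 := by
  rw [Ne, ZMod.natCast_eq_zero_iff]
  exact Nat.not_dvd_of_pos_of_lt h0 hk

theorem cycleG_reachable_add_one {n : ℕ} (u : ZMod n) : (cycleG n).Reachable u (u + 1) := by
  by_cases h : u = u + 1
  · rw [← h]
  · exact Adj.reachable (fromRel_adj _ _ _ |>.mpr ⟨h, Or.inr (add_sub_cancel_left u 1)⟩)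

theorem connected_cycleG (n : ℕ) : (cycleG n).Connected := by
  have h0 (z : ℤ) : (cycleG n).Reachable 0 z := by
    induction z using Int.induction_on with
    | zero => simp
    | succ k ih =>
      rw [Int.cast_add, Int.cast_one]
      exact ih.trans (cycleG_reachable_add_one _)
    | pred k ih =>
      rw [Int.cast_sub, Int.cast_one]
      exact ih.trans (by simpa using (cycleG_reachable_add_one (_ - 1 : ZMod n)).symm)
  refine connected_iff_exists_forall_reachable _ |>.mpr ⟨0, fun v => ?_⟩
  simpa using h0 (v.cast : ℤ)

theorem ladderful_cycleG {n : ℕ} (hn : 5 ≤ n) : Ladderful (cycleG n) := by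
  obtain ⟨h1, h2, h3, h4⟩ : ((1 : ℕ) : ZMod n) ≠ 0 ∧ ((2 : ℕ) : ZMod n) ≠ 0 ∧
      ((3 : ℕ) : ZMod n) ≠ 0 ∧ ((4 : ℕ) : ZMod n) ≠ 0 := by
    refine ⟨?_, ?_, ?_, ?_⟩ <;> exact ZMod.natCast_ne_zero_of_pos_of_lt (by norm_num) (by omega)
  push_cast at h1 h2 h3 h4
  intro v
  refine ⟨v + 2, v + 3, ?_, ?_, ?_, ?_, ?_⟩ <;>
    simp only [cycleG, fromRel_adj, Ne, not_and, not_or]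
  · exact fun e => h2 (by linear_combination e)
  · exact fun e => h3 (by linear_combination e)
  · exact ⟨fun e => h1 (by linear_combination -e), Or.inr (by ring)⟩
  · exact fun _ =>
      ⟨fun e => h3 (by linear_combination -e), fun e => h1 (by linear_combination e)⟩
  · exact fun _ =>
      ⟨fun e => h4 (by linear_combination -e), fun e => h2 (by linear_combination e)⟩

namespace SimpleGraph

variable {V : Type*} {G : SimpleGraph V}

theorem Connected.exists_adj_of_mem_of_notMem (hG : G.Connected) {S : Set V} {u v : V}
    (hu : u ∈ S) (hv : v ∉ S) : ∃ x ∈ S, ∃ y ∉ S, G.Adj x y := by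
  obtain ⟨d, -, hd, hd'⟩ := (hG u v).some.exists_boundary_dart S hu hv
  exact ⟨d.fst, hd, d.snd, hd', d.adj⟩

theorem eq_or_eq_of_adj_of_degree_le_two {x a b y : V} [Fintype (G.neighborSet x)]
    (hx : G.degree x ≤ 2) (ha : G.Adj x a) (hb : G.Adj x b) (hab : a ≠ b) (hy : G.Adj x y) :
    y = a ∨ y = b := by
  classical
  by_contra! hne
  have hsub : ({a, b, y} : Finset V) ⊆ G.neighborFinset x := by
    intro w
    simp only [Finset.mem_insert, Finset.mem_singleton, mem_neighborFinset]
    rintro (rfl | rfl | rfl) <;> assumption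
  have := Finset.card_le_card hsub
  rw [Finset.card_eq_three.mpr ⟨a, b, y, hab, hne.1.symm, hne.2.symm, rfl⟩,
    card_neighborFinset_eq_degree] at this
  omega

theorem _root_.Ladderful.degree_add_three_le [Fintype V] [DecidableRel G.Adj] (hL : Ladderful G)
    (v : V) : G.degree v + 3 ≤ Fintype.card V := by
  classical
  obtain ⟨w₁, w₂, h₁, h₂, h₁₂, hv₁, hv₂⟩ := hL v
  have hdisj : Disjoint (G.neighborFinset v) {v, w₁, w₂} := by
    simp [Finset.disjoint_insert_right, hv₁, hv₂]
  have hcard : ({v, w₁, w₂} : Finset V).card = 3 :=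
    Finset.card_eq_three.mpr ⟨v, w₁, w₂, h₁.symm, h₂.symm, G.ne_of_adj h₁₂, rfl⟩
  calc G.degree v + 3 = (G.neighborFinset v ∪ {v, w₁, w₂}).card := by
        rw [Finset.card_union_of_disjoint hdisj, hcard, card_neighborFinset_eq_degree]
    _ ≤ Fintype.card V := Finset.card_le_univ _

theorem Connected.exists_isChain_nodup_length_succ [G.LocallyFinite] (hG : G.Connected)
    (hdeg : ∀ v, G.degree v ≤ 2) {l : List V} (hc : l.IsChain G.Adj) (hnd : l.Nodup)
    (hl : l ≠ []) {v : V} (hv : v ∉ l) :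
    ∃ l' : List V, l'.IsChain G.Adj ∧ l'.Nodup ∧ l'.length = l.length + 1 := by
  obtain ⟨x, hx, y, hy, hxy⟩ :=
    hG.exists_adj_of_mem_of_notMem (S := {w | w ∈ l}) (List.head_mem hl) hv
  obtain ⟨i, hi, rfl⟩ := List.getElem_of_mem hx
  by_cases hfirst : i = 0
  · subst hfirst
    refine ⟨y :: l, hc.cons_of_ne_nil hl ?_, List.nodup_cons.mpr ⟨hy, hnd⟩, rfl⟩
    rw [List.head_eq_getElem]
    exact hxy.symm
  by_cases hlast : i + 1 = l.length
  · refine ⟨l ++ [y], hc.append (List.isChain_singleton y) ?_, ?_, by simp⟩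
    · simpa [List.getLast?_eq_getElem?, ← hlast] using hxy
    · simpa using hnd.concat hy
  -- an inner vertex of the path is saturated by its two neighbours on it
  have hprev : G.Adj l[i] l[i - 1] := by
    simpa [Nat.sub_add_cancel (Nat.pos_of_ne_zero hfirst)]
      using (hc.getElem (i - 1) (by omega)).symm
  have hnext : G.Adj l[i] l[i + 1] := hc.getElem i (by omega)
  have hne : l[i - 1] ≠ l[i + 1] := by
    rw [Ne, hnd.getElem_inj_iff]
    omega
  rcases eq_or_eq_of_adj_of_degree_le_two (hdeg _) hprev hnext hne hxy with rfl | rfl <;>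
    exact absurd (List.getElem_mem _) hy

theorem Connected.exists_isChain_nodup_length_eq_card [Fintype V] [G.LocallyFinite]
    (hG : G.Connected) (hdeg : ∀ v, G.degree v ≤ 2) :
    ∃ l : List V,
      l.IsChain G.Adj ∧ l.Nodup ∧ l.length = Fintype.card V ∧ ∀ v, v ∈ l := by
  classical
  have hpaths : ∀ k < Fintype.card V, ∃ l : List V,
      l.IsChain G.Adj ∧ l.Nodup ∧ l.length = k + 1 := by
    intro k
    induction k with
    | zero =>
      obtain ⟨v⟩ := hG.nonempty
      exact fun _ => ⟨[v], List.isChain_singleton v, List.nodup_singleton v, rfl⟩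
    | succ k ih =>
      intro hk
      obtain ⟨l, hc, hnd, hlen⟩ := ih (by omega)
      obtain ⟨v, -, hv⟩ := Finset.exists_mem_notMem_of_card_lt_card (s := l.toFinset)
        (t := Finset.univ) (by rw [Finset.card_univ]; have := l.toFinset_card_le; omega)
      rw [← hlen]
      exact hG.exists_isChain_nodup_length_succ hdeg hc hnd (List.ne_nil_of_length_pos (by omega))
        (mt List.mem_toFinset.mpr hv)
  have hpos : 0 < Fintype.card V := Fintype.card_pos_iff.mpr hG.nonempty
  obtain ⟨l, hc, hnd, hlen⟩ := hpaths (Fintype.card V - 1) (by omega)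
  have huniv : l.toFinset = Finset.univ :=
    Finset.eq_univ_of_card _ (by rw [List.toFinset_card_of_nodup hnd, hlen]; omega)
  exact ⟨l, hc, hnd, by omega, fun v => List.mem_toFinset.mp (huniv ▸ Finset.mem_univ v)⟩

def isoCycleGOfAdjAddOne [G.LocallyFinite] (hdeg : ∀ v, G.degree v ≤ 2) {n : ℕ} (hn : 3 ≤ n)
    (f : ZMod n ≃ V) (hf : ∀ i, G.Adj (f i) (f (i + 1))) : cycleG n ≃g G where
  toEquiv := f
  map_rel_iff' {i j} := by
    rw [cycleG, fromRel_adj, sub_eq_iff_eq_add', sub_eq_iff_eq_add']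
    constructor
    · intro h
      refine ⟨by rintro rfl; exact G.irrefl h, ?_⟩
      have hprev : G.Adj (f i) (f (i - 1)) := by simpa using (hf (i - 1)).symm
      have htwo : ((2 : ℕ) : ZMod n) ≠ 0 := ZMod.natCast_ne_zero_of_pos_of_lt two_pos hn
      have hne : f (i + 1) ≠ f (i - 1) :=
        f.injective.ne fun e => htwo (by push_cast; linear_combination e)
      rcases eq_or_eq_of_adj_of_degree_le_two (hdeg _) (hf i) hprev hne h with e | e
      · exact Or.inr (f.injective e)
      · exact Or.inl (by rw [f.injective e, sub_add_cancel])
    · rintro ⟨-, rfl | rfl⟩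
      · exact (hf j).symm
      · exact hf i

end SimpleGraph

theorem Ladderful.nonempty_iso_cycleG_five {V : Type*} [Fintype V] {G : SimpleGraph V}
    (hL : Ladderful G) (hV : Fintype.card V = 5) (hG : G.Connected) :
    Nonempty (G ≃g cycleG 5) := by
  classical
  have hdeg (v : V) : G.degree v ≤ 2 := by have := hL.degree_add_three_le v; omega
  obtain ⟨l, hc, hnd, hlen, hall⟩ := hG.exists_isChain_nodup_length_eq_card hdeg
  obtain ⟨a, b, c, d, e, rfl⟩ : ∃ a b c d e, l = [a, b, c, d, e] := by
    match l, hV ▸ hlen with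
    | [a, b, c, d, e], _ => exact ⟨a, b, c, d, e, rfl⟩
  simp only [List.isChain_cons_cons, List.isChain_singleton, and_true] at hc
  obtain ⟨hab, hbc, hcd, hde⟩ := hc
  have hfar (w : V) (hw : w ≠ c) (hcw : ¬G.Adj c w) : w = a ∨ w = e := by
    have := hall w
    simp only [List.mem_cons, List.not_mem_nil, or_false] at this
    rcases this with rfl | rfl | rfl | rfl | rfl
    · exact Or.inl rfl
    · exact absurd hbc.symm hcw
    · exact absurd rfl hw
    · exact absurd hcd hcw
    · exact Or.inr rfl
  have hea : G.Adj e a := by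
    obtain ⟨w₁, w₂, h₁, h₂, h₁₂, hc₁, hc₂⟩ := hL c
    rcases hfar w₁ h₁ hc₁ with rfl | rfl <;> rcases hfar w₂ h₂ hc₂ with rfl | rfl
    exacts [(G.irrefl h₁₂).elim, h₁₂.symm, h₁₂, (G.irrefl h₁₂).elim]
  let f : ZMod 5 ≃ V := Equiv.ofBijective (fun i : ZMod 5 => ![a, b, c, d, e] i)
    ((Fintype.bijective_iff_injective_and_card _).mpr ⟨List.nodup_ofFn.mp hnd, by simp [hV]⟩)
  refine ⟨(isoCycleGOfAdjAddOne hdeg (by norm_num) f fun i => ?_).symm⟩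
  fin_cases i
  exacts [hab, hbc, hcd, hde, hea]

/-- `C₅` is, up to isomorphism, the unique connected ladderful graph on
5 vertices. -/
theorem stmt_6 :
    (cycleG 5).Connected ∧ Ladderful (cycleG 5) ∧
      ∀ (V : Type) [Fintype V], Fintype.card V = 5 →
        ∀ G : SimpleGraph V, G.Connected → Ladderful G → Nonempty (G ≃g cycleG 5) :=
  ⟨connected_cycleG 5, ladderful_cycleG le_rfl, fun _ _ hV _ hG hL =>
    hL.nonempty_iso_cycleG_five hV hG⟩
end

section
/- Let X be a set equipped with the topology of pointwise convergence on functions X → X (where X is discrete), and let G ≤ Sym(X) be a group of permutations of X. If for some point x ∈ X whose G-orbit is all of X the stabilizer G_x is closed in Sym(X), and more generally if all point stabilizers G_x (x ∈ X) are closed in Sym(X), then G is closed in Sym(X). -/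
/-!
Point stabilizers are open subgroups of `Sym(X)`. If `g` is in the closure of `G`, the open coset
`g • Sym(X)_x` meets `G` in some `h`; then `h⁻¹ g` lies in the closure of `G` and in the open set
`Sym(X)_x`, hence in the closure of the closed set `G ∩ Sym(X)_x = G_x`. So `g ∈ h G_x ⊆ G`.
-/

open Topology

theorem Subgroup.isClosed_of_isClosed_inf_of_isOpen {M : Type*} [Group M] [TopologicalSpace M]
    [ContinuousConstSMul M M] {G K : Subgroup M} (hK : IsOpen (K : Set M))
    (hGK : IsClosed ((G ⊓ K : Subgroup M) : Set M)) : IsClosed (G : Set M) := by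
  refine isClosed_of_closure_subset fun g hg => ?_
  obtain ⟨_, ⟨k, hk, rfl⟩, hgk⟩ :=
    mem_closure_iff.mp hg _ (hK.smul g) ⟨1, K.one_mem, mul_one g⟩
  have hk_closure : k⁻¹ ∈ _root_.closure (G : Set M) := by
    simpa [smul_eq_mul] using map_mem_closure (continuous_const_smul (g * k)⁻¹) hg
      fun _ hx => G.mul_mem (G.inv_mem hgk) hx
  have hk_inf : k⁻¹ ∈ G ⊓ K := by
    rw [← SetLike.mem_coe, ← hGK.closure_eq, Subgroup.coe_inf, Set.inter_comm]
    exact hK.inter_closure ⟨K.inv_mem hk, hk_closure⟩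
  simpa using G.mul_mem hgk hk_inf.1

namespace Equiv.Perm

variable {X : Type*} [TopologicalSpace X] [DiscreteTopology X] [TopologicalSpace (Perm X)]

theorem isOpen_stabilizer (hX : Continuous fun g : Perm X => (g : X → X)) (x : X) :
    IsOpen (MulAction.stabilizer (Perm X) x : Set (Perm X)) :=
  (isOpen_discrete {x}).preimage ((continuous_apply x).comp hX)

theorem continuousConstSMul_of_isInducing
    (hX : IsInducing fun g : Perm X => ((g : X → X), (g.symm : X → X))) :
    ContinuousConstSMul (Perm X) (Perm X) where
  continuous_const_smul h := by
    have hcoe : Continuous fun g : Perm X => (g : X → X) := continuous_fst.comp hX.continuous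
    have hsymm : Continuous fun g : Perm X => (g.symm : X → X) :=
      continuous_snd.comp hX.continuous
    refine hX.continuous_iff.mpr (.prodMk ?_ ?_)
    · exact continuous_pi fun x =>
        continuous_of_discreteTopology.comp ((continuous_apply x).comp hcoe)
    · exact continuous_pi fun x => (continuous_apply (h.symm x)).comp hsymm

end Equiv.Perm

/-- in the permutation topology on `Sym(X)` (induced by pointwise
convergence of `g` and `g⁻¹`, with `X` discrete), a permutation group all of whose point
stabilizers are closed is itself closed. -/
theorem stmt_17 {X : Type*} (G : Subgroup (Equiv.Perm X)) :
    letI : TopologicalSpace X := ⊥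
    letI : TopologicalSpace (Equiv.Perm X) :=
      TopologicalSpace.induced
        (fun g : Equiv.Perm X => ((g : X → X), (g.symm : X → X))) inferInstance
    (∀ x : X, IsClosed {g : Equiv.Perm X | g ∈ G ∧ g x = x}) →
      IsClosed (G : Set (Equiv.Perm X)) := by
  let _ : TopologicalSpace X := ⊥
  let _ : TopologicalSpace (Equiv.Perm X) :=
    .induced (fun g : Equiv.Perm X => ((g : X → X), (g.symm : X → X))) inferInstance
  intro hstab
  have : DiscreteTopology X := ⟨rfl⟩
  have hX : IsInducing fun g : Equiv.Perm X => ((g : X → X), (g.symm : X → X)) := ⟨rfl⟩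
  have := Equiv.Perm.continuousConstSMul_of_isInducing hX
  rcases isEmpty_or_nonempty X with _ | ⟨⟨x⟩⟩
  · rw [Subsingleton.elim G ⊤, Subgroup.coe_top]
    exact isClosed_univ
  · exact Subgroup.isClosed_of_isClosed_inf_of_isOpen
      (Equiv.Perm.isOpen_stabilizer (continuous_fst.comp hX.continuous) x) (hstab x)
end
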